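/- arXiv:1705.00303 — 7 statements merged into one kernel-verified Lean document; each statement's English description precedes it below -/
import Mathlib

section
/- Let F = (AR, att) be an argument graph. Then AR = arg(und(F)) ∪ def(nmd(F)) ∪ {β ∈ AR : some α ∈ def(nmd(F)) has α→β}, where arg(und(F)) denotes the set of all arguments occurring in some defeater of defenses of F, i.e., arg(und(F)) = {α ∈ AR : (α,β) ∈ und(F) for some β} ∪ {β ∈ AR : (α,β) ∈ und(F) for some α} ∪ {β ∈ AR : (⌀,β) ∈ und(F)}. -/
open Set

/-- An argument graph (argumentation framework): a finite set of arguments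
with an attack relation between arguments of the graph. -/
structure AF (A : Type*) where
  AR : Set A
  att : A → A → Prop
  finite : AR.Finite
  att_mem : ∀ a b, att a b → a ∈ AR ∧ b ∈ AR

namespace AF

variable {A : Type*} (F : AF A)

/-- An argument is initial if no argument attacks it. -/
def Initial (a : A) : Prop := ∀ b, ¬ F.att b a

/-- A set of arguments is conflict-free. -/
def ConflictFree (E : Set A) : Prop :=
  E ⊆ F.AR ∧ ∀ a ∈ E, ∀ b ∈ E, ¬ F.att a b

/-- α is defended by E: every attacker of α is attacked by E. -/
def Defends (E : Set A) (a : A) : Prop :=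
  ∀ b, F.att b a → ∃ c ∈ E, F.att c b

def Admissible (E : Set A) : Prop :=
  F.ConflictFree E ∧ ∀ a ∈ E, F.Defends E a

def Complete (E : Set A) : Prop :=
  F.Admissible E ∧ ∀ a ∈ F.AR, F.Defends E a → a ∈ E

/-- The set of complete extensions. -/
def co : Set (Set A) := {E | F.Complete E}

/-- The set of grounded extensions (minimal complete extensions). -/
def gr : Set (Set A) := {E | F.Complete E ∧ ∀ E', F.Complete E' → E ⊆ E'}

/-- The set of preferred extensions (maximal complete extensions). -/
def pr : Set (Set A) := {E | F.Complete E ∧ ∀ E', F.Complete E' → E ⊆ E' → E = E'}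

/-- The set of stable extensions. -/
def st : Set (Set A) :=
  {E | F.ConflictFree E ∧ ∀ a ∈ F.AR, a ∉ E → ∃ b ∈ E, F.att b a}

/-- The set of defenses of `F`.  A defense is either a pair `⟨some α, β⟩` with
`{α, β}` conflict-free and some `γ` with `α→γ` and `γ→β`, or a pair
`⟨none, β⟩` with `β` initial (`none` plays the role of `⌀`). -/
def nmd : Set (Option A × A) :=
  {p | (∃ α, p.1 = some α ∧ α ∈ F.AR ∧ p.2 ∈ F.AR ∧
          F.ConflictFree {α, p.2} ∧
          ∃ γ, γ ∈ F.AR ∧ F.att α γ ∧ F.att γ p.2)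
     ∨ (p.1 = none ∧ p.2 ∈ F.AR ∧ F.Initial p.2)}

/-- The set of defeaters of defenses (DoDs) of `F`. -/
def und : Set (Option A × A) :=
  {p | (∃ α, p.1 = some α ∧ α ∈ F.AR ∧ p.2 ∈ F.AR ∧
          ¬ F.ConflictFree {α, p.2} ∧
          ∃ γ, γ ∈ F.AR ∧ γ ≠ α ∧ γ ≠ p.2 ∧ F.att α γ ∧ F.att γ p.2)
     ∨ (p.1 = none ∧ p.2 ∈ F.AR ∧
          (F.att p.2 p.2 ∨ ∃ γ, F.att γ γ ∧ F.att γ p.2))}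

/-- Nodes of the defense graph: defenses together with their defeaters. -/
def dgn : Set (Option A × A) := F.nmd ∪ F.und

/-- Lifting of the attack relation to `Option`: conditions mentioning `⌀` are false. -/
def oatt (x y : Option A) : Prop := ∃ a b, x = some a ∧ y = some b ∧ F.att a b

/-- The attack relation `→d` of the defense graph:
`[x,α] →d [y,β]` iff `x→y`, `x→β`, `α→y` or `α→β`. -/
def dAtt (p q : Option A × A) : Prop :=
  F.oatt p.1 q.1 ∨ F.oatt p.1 (some q.2) ∨ F.oatt (some p.2) q.1 ∨ F.att p.2 q.2

/-- Conflict-freeness of a set of defenses. -/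
def DConflictFree (D : Set (Option A × A)) : Prop :=
  D ⊆ F.nmd ∧ ∀ X ∈ D, ∀ Y ∈ D, ¬ F.dAtt X Y

/-- A defense X is defended by D in the defense graph. -/
def DDefends (D : Set (Option A × A)) (X : Option A × A) : Prop :=
  ∀ Y ∈ F.dgn, F.dAtt Y X → ∃ Z ∈ D, F.dAtt Z Y

def DAdmissible (D : Set (Option A × A)) : Prop :=
  F.DConflictFree D ∧ ∀ X ∈ D, F.DDefends D X

def DComplete (D : Set (Option A × A)) : Prop :=
  F.DAdmissible D ∧ ∀ X ∈ F.nmd, F.DDefends D X → X ∈ D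

/-- Complete extensions of defenses of the defense graph DG(F). -/
def CO : Set (Set (Option A × A)) := {D | F.DComplete D}

/-- Grounded extensions of defenses (minimal complete extensions of defenses). -/
def GR : Set (Set (Option A × A)) :=
  {D | F.DComplete D ∧ ∀ D', F.DComplete D' → D ⊆ D'}

/-- Preferred extensions of defenses (maximal complete extensions of defenses). -/
def PR : Set (Set (Option A × A)) :=
  {D | F.DComplete D ∧ ∀ D', F.DComplete D' → D ⊆ D' → D = D'}

/-- Stable extensions of defenses. -/
def ST : Set (Set (Option A × A)) :=
  {D | F.DConflictFree D ∧ ∀ X ∈ F.dgn, X ∉ D → ∃ Z ∈ D, F.dAtt Z X}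

/-- `def(D)`: the defendees and defenders occurring in `D`. -/
def defSet (D : Set (Option A × A)) : Set A :=
  {a | a ∈ F.AR ∧ ((∃ x, (x, a) ∈ D) ∨ (∃ b, ((some a : Option A), b) ∈ D))}

/-- `d(E) = {⟨x,y⟩ ∈ nmd(F) : x ∈ E ∪ {⌀} and y ∈ E}`. -/
def dE (E : Set A) : Set (Option A × A) :=
  {p | p ∈ F.nmd ∧ (p.1 = none ∨ ∃ a ∈ E, p.1 = some a) ∧ p.2 ∈ E}

/-- The arguments occurring in some defeater of defenses of `F`. -/
def argUnd : Set A :=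
  {a | a ∈ F.AR ∧ ((∃ b, ((some a : Option A), b) ∈ F.und) ∨ ∃ x, (x, a) ∈ F.und)}

/-- The c-kernel of `F`. -/
def ck : AF A where
  AR := F.AR
  att a b := F.att a b ∧ ¬(a ≠ b ∧ F.att a a ∧ F.att b b)
  finite := F.finite
  att_mem a b h := F.att_mem a b h.1

/-- Union of two argument graphs. -/
def union (F G : AF A) : AF A where
  AR := F.AR ∪ G.AR
  att a b := F.att a b ∨ G.att a b
  finite := F.finite.union G.finite
  att_mem a b h := by
    rcases h with h | h
    · exact ⟨Or.inl (F.att_mem a b h).1, Or.inl (F.att_mem a b h).2⟩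
    · exact ⟨Or.inr (G.att_mem a b h).1, Or.inr (G.att_mem a b h).2⟩

/-- A set of defenses `D` regarded as a binary relation on `AR ∪ {⌀}`. -/
def dRel (D : Set (Option A × A)) : Option A → Option A → Prop :=
  fun x y => ∃ b, y = some b ∧ (x, b) ∈ D

/-- The root reason `RR(α, D)` of `α` w.r.t. an extension of defenses `D`,
where `D⁺` is the transitive closure of `D`. -/
def RR (α : A) (D : Set (Option A × A)) : Set (Option A) :=
  {x | (F.Initial α ∧ x = none) ∨
       (¬ F.Initial α ∧ ∃ β, x = some β ∧ β ∈ F.AR ∧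
         ((Relation.TransGen (dRel D) (some β) (some β) ∧ β = α) ∨
          (Relation.TransGen (dRel D) (some β) (some α) ∧
            (Relation.TransGen (dRel D) (some β) (some β) ∨ F.Initial β))))}

/-- The set of root reasons for accepting `α` under complete defense semantics. -/
def rrCO (α : A) : Set (Set (Option A)) :=
  {S | ∃ D ∈ F.CO, S = F.RR α D}

end AF

/-- `AR = arg(und(F)) ∪ def(nmd(F)) ∪ (def(nmd(F)))→`. -/
theorem statement0 {A : Type*} (F : AF A) :
    F.AR = F.argUnd ∪ F.defSet F.nmd ∪
      {b | b ∈ F.AR ∧ ∃ a ∈ F.defSet F.nmd, F.att a b} := by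
  apply Set.Subset.antisymm
  · intro a ha
    by_cases hinit : F.Initial a
    · exact Or.inl (Or.inr ⟨ha, Or.inl ⟨none, Or.inr ⟨rfl, ha, hinit⟩⟩⟩)
    · by_cases hsa : F.att a a
      · exact Or.inl (Or.inl ⟨ha, Or.inr ⟨none, Or.inr ⟨rfl, ha, Or.inl hsa⟩⟩⟩)
      simp only [AF.Initial, not_forall, not_not] at hinit
      obtain ⟨γ, hγa⟩ := hinit
      have hγ : γ ∈ F.AR := (F.att_mem _ _ hγa).1
      by_cases hγinit : F.Initial γ
      · exact Or.inr ⟨ha, γ, ⟨hγ, Or.inl ⟨none, Or.inr ⟨rfl, hγ, hγinit⟩⟩⟩, hγa⟩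
      · by_cases hγγ : F.att γ γ
        · exact Or.inl (Or.inl ⟨ha, Or.inr ⟨none, Or.inr ⟨rfl, ha, Or.inr ⟨γ, hγγ, hγa⟩⟩⟩⟩)
        simp only [AF.Initial, not_forall, not_not] at hγinit
        obtain ⟨α, hαγ⟩ := hγinit
        have hα : α ∈ F.AR := (F.att_mem _ _ hαγ).1
        have hγα : γ ≠ α := fun h => hγγ (h ▸ hαγ)
        have hγa' : γ ≠ a := fun h => hsa (h ▸ hγa)
        by_cases hcf : F.ConflictFree {α, a}
        · exact Or.inl (Or.inr ⟨ha, Or.inl ⟨some α,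
            Or.inl ⟨α, rfl, hα, ha, hcf, γ, hγ, hαγ, hγa⟩⟩⟩)
        · exact Or.inl (Or.inl ⟨ha, Or.inr ⟨some α,
            Or.inl ⟨α, rfl, hα, ha, hcf, γ, hγ, hγα, hγa', hαγ, hγa⟩⟩⟩)
  · rintro a ((⟨ha, _⟩ | ⟨ha, _⟩) | ⟨ha, _⟩) <;> exact ha
end

section
/- Let F = (AR, att) be an argument graph and Σ ∈ {CO, GR, PR, ST}. For every D ∈ Σ(DG(F)), every defense ⟨x,y⟩ ∈ D (with x ∈ AR ∪ {⌀}, y ∈ AR), and every γ ∈ AR: if γ→x or γ→y, then def(D) attacks γ, i.e., some η ∈ def(D) has η→γ. -/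
open Set

namespace AF

variable {A : Type*}

/-- `a` is a component of the pair `p`. -/
def comps (p : Option A × A) (a : A) : Prop := p.1 = some a ∨ p.2 = a

lemma dAtt_intro (F : AF A) {p q : Option A × A} {a b : A}
    (ha : comps p a) (hb : comps q b) (hab : F.att a b) : F.dAtt p q := by
  rcases ha with ha | ha <;> rcases hb with hb | hb
  · exact Or.inl ⟨a, b, ha, hb, hab⟩
  · exact Or.inr (Or.inl ⟨a, b, ha, by rw [hb], hab⟩)
  · exact Or.inr (Or.inr (Or.inl ⟨a, b, by rw [ha], hb, hab⟩))
  · exact Or.inr (Or.inr (Or.inr (by rw [ha, hb]; exact hab)))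

lemma dAtt_elim (F : AF A) {p q : Option A × A} (h : F.dAtt p q) :
    ∃ a b, comps p a ∧ comps q b ∧ F.att a b := by
  rcases h with ⟨a, b, ha, hb, hab⟩ | ⟨a, b, ha, hb, hab⟩ | ⟨a, b, ha, hb, hab⟩ | h
  · exact ⟨a, b, Or.inl ha, Or.inl hb, hab⟩
  · exact ⟨a, b, Or.inl ha, Or.inr (Option.some.inj hb), hab⟩
  · exact ⟨a, b, Or.inr (Option.some.inj ha), Or.inl hb, hab⟩
  · exact ⟨p.2, q.2, Or.inr rfl, Or.inr rfl, h⟩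

lemma nmd_comp (F : AF A) {p : Option A × A} (hp : p ∈ F.nmd) {a : A}
    (h : comps p a) : a ∈ F.AR ∧ ¬ F.att a a := by
  rcases hp with ⟨α, h1, hα, h2, hcf, _⟩ | ⟨h1, h2, hinit⟩
  · rcases h with h | h
    · have : α = a := Option.some.inj (h1 ▸ h)
      subst this
      exact ⟨hα, hcf.2 α (Set.mem_insert _ _) α (Set.mem_insert _ _)⟩
    · rw [← h]
      exact ⟨h2, hcf.2 p.2 (Set.mem_insert_of_mem _ rfl) p.2 (Set.mem_insert_of_mem _ rfl)⟩
  · rcases h with h | h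
    · rw [h1] at h; exact absurd h (by simp)
    · rw [← h]
      exact ⟨h2, fun haa => hinit p.2 haa⟩

lemma dgn_comp_AR (F : AF A) {p : Option A × A} (hp : p ∈ F.dgn) {a : A}
    (h : comps p a) : a ∈ F.AR := by
  rcases hp with hp | hp
  · exact (F.nmd_comp hp h).1
  · rcases hp with ⟨α, h1, hα, h2, _, _⟩ | ⟨h1, h2, _⟩
    · rcases h with h | h
      · have : α = a := Option.some.inj (h1 ▸ h)
        exact this ▸ hα
      · exact h ▸ h2
    · rcases h with h | h
      · rw [h1] at h; exact absurd h (by simp)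
      · exact h ▸ h2

lemma defSet_of_comp (F : AF A) {D : Set (Option A × A)} (hsub : D ⊆ F.nmd)
    {Z : Option A × A} (hZ : Z ∈ D) {a : A} (h : comps Z a) : a ∈ F.defSet D := by
  refine ⟨(F.nmd_comp (hsub hZ) h).1, ?_⟩
  rcases h with h | h
  · exact Or.inr ⟨Z.2, by rw [← h]; exact hZ⟩
  · exact Or.inl ⟨Z.1, by rw [← h]; exact hZ⟩

lemma main_lemma (F : AF A) (D : Set (Option A × A))
    (hsub : D ⊆ F.nmd)
    (hcf : ∀ X ∈ D, ∀ Y ∈ D, ¬ F.dAtt X Y)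
    (hdef : ∀ X ∈ D, F.DDefends D X)
    (hlast : ∀ M ∈ F.nmd, M ∉ D →
      (∃ Z ∈ D, F.dAtt Z M) ∨ (∃ W ∈ F.dgn, F.dAtt W M ∧ ∀ Z ∈ D, ¬ F.dAtt Z W))
    (x : Option A) (y : A) (hxy : (x, y) ∈ D)
    (γ : A) (hγ : γ ∈ F.AR)
    (h : F.oatt (some γ) x ∨ F.att γ y) :
    ∃ η ∈ F.defSet D, F.att η γ := by
  rcases hsub hxy with ⟨α, hx, hαAR, hyAR, hCFαy, γ0, hγ0AR, hαγ0, hγ0y⟩ | ⟨hx, hyAR, hyinit⟩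
  swap
  · -- x = none, y initial: contradiction
    rcases h with ⟨a, b, _, hb, _⟩ | hay
    · have hx' : x = none := hx
      rw [hx'] at hb; exact absurd hb (by simp)
    · exact absurd hay (hyinit γ)
  -- x = some α
  have hx' : x = some α := hx
  subst hx'
  -- key: any node containing γ attacks (some α, y)
  have hkey : ∀ N : Option A × A, comps N γ → F.dAtt N (some α, y) := by
    intro N hN
    rcases h with ⟨a, b, ha, hb, hab⟩ | hγy
    · have : γ = a := Option.some.inj ha
      subst this
      have : α = b := Option.some.inj hb
      subst this
      exact F.dAtt_intro hN (Or.inl rfl) hab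
    · exact F.dAtt_intro hN (Or.inr rfl) hγy
  -- helper: from a node of shape (none, γ) in dgn, conclude
  have hnone : ((none : Option A), γ) ∈ F.dgn → ∃ η ∈ F.defSet D, F.att η γ := by
    intro hNdgn
    obtain ⟨Z, hZ, hZN⟩ := hdef _ hxy _ hNdgn (hkey _ (Or.inr rfl))
    obtain ⟨a, b, hca, hcb, hab⟩ := F.dAtt_elim hZN
    rcases hcb with hcb | hcb
    · exact absurd hcb (by simp)
    · have hbγ : γ = b := hcb
      subst hbγ
      exact ⟨a, F.defSet_of_comp hsub hZ hca, hab⟩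
  by_cases hsa : F.att γ γ ∨ ∃ σ, F.att σ σ ∧ F.att σ γ
  · exact hnone (Or.inr (Or.inr ⟨rfl, hγ, hsa⟩))
  by_cases hinit : F.Initial γ
  · exact hnone (Or.inl (Or.inr ⟨rfl, hγ, hinit⟩))
  push_neg at hsa
  obtain ⟨hγγ, hsa2⟩ := hsa
  simp only [Initial, not_forall, not_not] at hinit
  obtain ⟨δ, hδ⟩ := hinit
  have hδAR : δ ∈ F.AR := (F.att_mem δ γ hδ).1
  have hδδ : ¬ F.att δ δ := fun hd => hsa2 δ hd hδ
  have hδγ : δ ≠ γ := fun e => hγγ (e ▸ hδ)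
  -- extract target t from h
  obtain ⟨t, hγt, htt, htAR, hatt_t⟩ :
      ∃ t, F.att γ t ∧ ¬ F.att t t ∧ t ∈ F.AR ∧
        (∀ p : Option A × A, ∀ a, comps p a → F.att a t → F.dAtt p (some α, y)) := by
    rcases h with ⟨a, b, ha, hb, hab⟩ | hγy
    · have h1 : γ = a := Option.some.inj ha
      have h2 : α = b := Option.some.inj hb
      subst h1; subst h2
      exact ⟨α, hab, hCFαy.2 α (Set.mem_insert _ _) α (Set.mem_insert _ _), hαAR,
        fun p a hc hat => F.dAtt_intro hc (Or.inl rfl) hat⟩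
    · exact ⟨y, hγy,
        hCFαy.2 y (Set.mem_insert_of_mem _ rfl) y (Set.mem_insert_of_mem _ rfl), hyAR,
        fun p a hc hat => F.dAtt_intro hc (Or.inr rfl) hat⟩
  have hγnet : γ ≠ t := fun e => hγγ (by rw [e] at hγt ⊢; exact hγt)
  -- the finisher: from η attacking δ with D "safe" on η, conclude
  have finisher : ∀ η, η ∈ F.AR → F.att η δ →
      (∀ Z2 ∈ D, ∀ ζ, comps Z2 ζ → ¬ F.att ζ η) → ∃ η' ∈ F.defSet D, F.att η' γ := by
    intro η hηAR hηδ hDsafe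
    have hδη : δ ≠ η := fun e => hδδ (by rw [e]; rw [e] at hηδ; exact hηδ)
    have hM2 : ((some η : Option A), γ) ∈ F.dgn := by
      by_cases hc : F.ConflictFree {η, γ}
      · exact Or.inl (Or.inl ⟨η, rfl, hηAR, hγ, hc, δ, hδAR, hηδ, hδ⟩)
      · exact Or.inr (Or.inl ⟨η, rfl, hηAR, hγ, hc, δ, hδAR, hδη, hδγ, hηδ, hδ⟩)
    obtain ⟨Z2, hZ2, hZ2M2⟩ := hdef _ hxy _ hM2 (hkey _ (Or.inr rfl))
    obtain ⟨a, b, hca, hcb, hab⟩ := F.dAtt_elim hZ2M2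
    rcases hcb with hcb | hcb
    · have : η = b := Option.some.inj hcb
      subst this
      exact absurd hab (hDsafe Z2 hZ2 a hca)
    · have hbγ : γ = b := hcb
      subst hbγ
      exact ⟨a, F.defSet_of_comp hsub hZ2 hca, hab⟩
  -- from Z ∈ D attacking (some δ, t), conclude
  have fromZ : ∀ Z ∈ D, F.dAtt Z (some δ, t) → ∃ η ∈ F.defSet D, F.att η γ := by
    intro Z hZ hZM
    obtain ⟨a, b, hca, hcb, hab⟩ := F.dAtt_elim hZM
    rcases hcb with hcb | hcb
    · have : δ = b := Option.some.inj hcb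
      subst this
      refine finisher a (F.nmd_comp (hsub hZ) hca).1 hab ?_
      intro Z2 hZ2 ζ hcζ hζa
      exact hcf Z2 hZ2 Z hZ (F.dAtt_intro hcζ hca hζa)
    · have hbt : t = b := hcb
      subst hbt
      exact absurd (hcf Z hZ _ hxy) (not_not.mpr (hatt_t Z a hca hab))
  have hMdgn : ((some δ : Option A), t) ∈ F.dgn := by
    by_cases hc : F.ConflictFree {δ, t}
    · exact Or.inl (Or.inl ⟨δ, rfl, hδAR, htAR, hc, γ, hγ, hδ, hγt⟩)
    · exact Or.inr (Or.inl ⟨δ, rfl, hδAR, htAR, hc, γ, hγ, hδγ.symm, hγnet, hδ, hγt⟩)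
  by_cases hc : F.ConflictFree {δ, t}
  · -- M ∈ nmd
    have hMnmd : ((some δ : Option A), t) ∈ F.nmd :=
      Or.inl ⟨δ, rfl, hδAR, htAR, hc, γ, hγ, hδ, hγt⟩
    by_cases hMD : ((some δ : Option A), t) ∈ D
    · exact ⟨δ, ⟨hδAR, Or.inr ⟨t, hMD⟩⟩, hδ⟩
    · rcases hlast _ hMnmd hMD with ⟨Z, hZ, hZM⟩ | ⟨W, hW, hWM, hWsafe⟩
      · exact fromZ Z hZ hZM
      · obtain ⟨a, b, hca, hcb, hab⟩ := F.dAtt_elim hWM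
        rcases hcb with hcb | hcb
        · have : δ = b := Option.some.inj hcb
          subst this
          have hδa : δ ≠ a := fun e => hδδ (e ▸ hab)
          refine finisher a (F.dgn_comp_AR hW hca) hab ?_
          intro Z2 hZ2 ζ hcζ hζa
          exact hWsafe Z2 hZ2 (F.dAtt_intro hcζ hca hζa)
        · have hbt : t = b := hcb
          subst hbt
          obtain ⟨Z, hZ, hZW⟩ := hdef _ hxy _ hW (hatt_t W a hca hab)
          exact absurd hZW (hWsafe Z hZ)
  · -- M ∈ und: δ→t or t→δ
    have hor : F.att δ t ∨ F.att t δ := by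
      by_contra hno
      push_neg at hno
      refine hc ⟨?_, ?_⟩
      · intro z hz
        rcases hz with hz | hz
        · exact hz ▸ hδAR
        · simp only [Set.mem_singleton_iff] at hz; exact hz ▸ htAR
      · intro a ha b hb hab
        rcases ha with ha | ha <;> rcases hb with hb | hb <;>
          simp only [Set.mem_singleton_iff] at * <;> subst ha <;> subst hb
        · exact hδδ hab
        · exact hno.1 hab
        · exact hno.2 hab
        · exact htt hab
    rcases hor with hδt | htδ
    · obtain ⟨Z, hZ, hZM⟩ := hdef _ hxy _ hMdgn (hatt_t _ δ (Or.inl rfl) hδt)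
      exact fromZ Z hZ hZM
    · refine finisher t htAR htδ ?_
      intro Z2 hZ2 ζ hcζ hζt
      exact hcf Z2 hZ2 _ hxy (hatt_t Z2 ζ hcζ hζt)

end AF

/-- Lemma 1: for any extension of defenses `D` under a semantics
`Σ ∈ {CO, GR, PR, ST}`, any defense `⟨x,y⟩ ∈ D` and any `γ ∈ AR` attacking `x`
or `y`, `def(D)` attacks `γ`. -/
theorem statement1 {A : Type*} (F : AF A) (D : Set (Option A × A))
    (hD : D ∈ F.CO ∨ D ∈ F.GR ∨ D ∈ F.PR ∨ D ∈ F.ST)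
    (x : Option A) (y : A) (hxy : (x, y) ∈ D)
    (γ : A) (hγ : γ ∈ F.AR)
    (h : F.oatt (some γ) x ∨ F.att γ y) :
    ∃ η ∈ F.defSet D, F.att η γ := by
  have hC : F.DComplete D ∨ D ∈ F.ST := by
    rcases hD with h | h | h | h
    · exact Or.inl h
    · exact Or.inl h.1
    · exact Or.inl h.1
    · exact Or.inr h
  rcases hC with ⟨⟨⟨hsub, hcf⟩, hadm⟩, hcomp⟩ | ⟨⟨hsub, hcf⟩, hst⟩
  · refine F.main_lemma D hsub hcf hadm ?_ x y hxy γ hγ h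
    intro M hM hMD
    right
    have hnd : ¬ F.DDefends D M := fun hd => hMD (hcomp M hM hd)
    simp only [AF.DDefends] at hnd
    push_neg at hnd
    exact hnd
  · refine F.main_lemma D hsub hcf ?_ ?_ x y hxy γ hγ h
    · intro X hX Y hYdgn hYX
      by_cases hYD : Y ∈ D
      · exact (hcf Y hYD X hX hYX).elim
      · exact hst Y hYdgn hYD
    · intro M hM hMD
      exact Or.inl (hst M (Or.inl hM) hMD)
end

section
/- Let F = (AR, att) be an argument graph. For every complete extension of defenses D ∈ CO(DG(F)), the set def(D) is a complete extension of F, i.e., def(D) ∈ co(F). -/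
open Set

namespace AF

variable {A : Type*} (F : AF A) {D : Set (Option A × A)}

/-- `z` is a component of the pair `Z`. -/
def IsComp (z : A) (Z : Option A × A) : Prop := Z.1 = some z ∨ Z.2 = z

lemma dAtt_of_comp {z y : A} {Z Y : Option A × A}
    (hz : IsComp z Z) (hy : IsComp y Y) (h : F.att z y) : F.dAtt Z Y := by
  rcases hz with hz | hz <;> rcases hy with hy | hy
  · exact Or.inl ⟨z, y, hz, hy, h⟩
  · exact Or.inr (Or.inl ⟨z, y, hz, by rw [hy], h⟩)
  · exact Or.inr (Or.inr (Or.inl ⟨z, y, by rw [hz], hy, h⟩))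
  · exact Or.inr (Or.inr (Or.inr (by rw [hz, hy]; exact h)))

lemma exists_comp_of_dAtt {Y P : Option A × A} (h : F.dAtt Y P) :
    ∃ y q, IsComp y Y ∧ IsComp q P ∧ F.att y q := by
  rcases h with ⟨a, b, h1, h2, h⟩ | ⟨a, b, h1, h2, h⟩ | ⟨a, b, h1, h2, h⟩ | h
  · exact ⟨a, b, Or.inl h1, Or.inl h2, h⟩
  · refine ⟨a, P.2, Or.inl h1, Or.inr rfl, ?_⟩
    have : P.2 = b := Option.some_inj.mp h2
    rw [this]; exact h
  · refine ⟨Y.2, b, Or.inr rfl, Or.inl h2, ?_⟩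
    have : Y.2 = a := Option.some_inj.mp h1
    rw [this]; exact h
  · exact ⟨Y.2, P.2, Or.inr rfl, Or.inr rfl, h⟩

lemma comp_mem_AR {z : A} {Z : Option A × A} (hZ : Z ∈ F.nmd) (hz : IsComp z Z) :
    z ∈ F.AR := by
  rcases hZ with ⟨α, h1, hα, h2, _⟩ | ⟨h1, h2, _⟩ <;> rcases hz with hz | hz
  · rw [h1] at hz
    have : α = z := Option.some_inj.mp hz
    exact this ▸ hα
  · exact hz ▸ h2
  · rw [h1] at hz; exact absurd hz (by simp)
  · exact hz ▸ h2

lemma mem_defSet_of (hsub : D ⊆ F.nmd) {z : A} {Z : Option A × A}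
    (hZ : Z ∈ D) (hz : IsComp z Z) : z ∈ F.defSet D := by
  refine ⟨F.comp_mem_AR (hsub hZ) hz, ?_⟩
  rcases hz with hz | hz
  · exact Or.inr ⟨Z.2, by rw [← hz]; exact hZ⟩
  · exact Or.inl ⟨Z.1, by rw [← hz]; exact hZ⟩

lemma exists_of_mem_defSet {z : A} (h : z ∈ F.defSet D) : ∃ Z ∈ D, IsComp z Z := by
  rcases h.2 with ⟨x, hx⟩ | ⟨b, hb⟩
  · exact ⟨(x, z), hx, Or.inr rfl⟩
  · exact ⟨(some z, b), hb, Or.inl rfl⟩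

lemma defSet_cf (hD : D ∈ F.CO) {z w : A} (hz : z ∈ F.defSet D)
    (hw : w ∈ F.defSet D) : ¬ F.att z w := by
  intro h
  obtain ⟨Z, hZ, hcz⟩ := F.exists_of_mem_defSet hz
  obtain ⟨W, hW, hcw⟩ := F.exists_of_mem_defSet hw
  exact hD.1.1.2 Z hZ W hW (F.dAtt_of_comp hcz hcw h)

lemma counter (hD : D ∈ F.CO) {z : A} (hz : z ∈ F.defSet D) {Y : Option A × A}
    (hY : Y ∈ F.dgn) {y : A} (hcy : IsComp y Y) (hatt : F.att y z) :
    ∃ Z ∈ D, F.dAtt Z Y := by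
  obtain ⟨Z, hZ, hcz⟩ := F.exists_of_mem_defSet hz
  exact hD.1.2 Z hZ Y hY (F.dAtt_of_comp hcy hcz hatt)

lemma no_E_attacker (hD : D ∈ F.CO) {a : A} (hdef : F.Defends (F.defSet D) a)
    {e : A} (he : e ∈ F.defSet D) (h : F.att e a) : False := by
  obtain ⟨f, hf, hfe⟩ := hdef e h
  exact F.defSet_cf hD hf he hfe

lemma node_mem_dgn {y b γ : A} (hy : y ∈ F.AR) (hb : b ∈ F.AR) (hγ : γ ∈ F.AR)
    (h1 : F.att y γ) (h2 : F.att γ b) (hne1 : γ ≠ y) (hne2 : γ ≠ b) :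
    ((some y, b) : Option A × A) ∈ F.dgn := by
  by_cases hcf : F.ConflictFree {y, b}
  · exact Or.inl (Or.inl ⟨y, rfl, hy, hb, hcf, γ, hγ, h1, h2⟩)
  · exact Or.inr (Or.inl ⟨y, rfl, hy, hb, hcf, γ, hγ, hne1, hne2, h1, h2⟩)

/-- Closure part: every argument defended by `def(D)` is in `def(D)`. -/
lemma lemmaL2 (hD : D ∈ F.CO) {a : A} (ha : a ∈ F.AR)
    (hdef : F.Defends (F.defSet D) a) : a ∈ F.defSet D := by
  by_cases hinit : F.Initial a
  · have hmem : ((none, a) : Option A × A) ∈ F.nmd := Or.inr ⟨rfl, ha, hinit⟩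
    have hdd : F.DDefends D (none, a) := by
      intro Y hY hatt
      obtain ⟨y, q, hcy, hcq, hq⟩ := F.exists_comp_of_dAtt hatt
      rcases hcq with h | h
      · exact absurd h (by simp)
      · rw [← h] at hq; exact absurd hq (hinit y)
    exact ⟨ha, Or.inl ⟨none, hD.2 _ hmem hdd⟩⟩
  · obtain ⟨b, hb⟩ : ∃ b, F.att b a := by
      unfold AF.Initial at hinit; push_neg at hinit; exact hinit
    obtain ⟨c, hc, hcb⟩ := hdef b hb
    have hbAR : b ∈ F.AR := (F.att_mem b a hb).1
    have hcAR : c ∈ F.AR := hc.1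
    have hnaa : ¬ F.att a a := by
      intro h
      obtain ⟨e, he, hea⟩ := hdef a h
      exact F.no_E_attacker hD hdef he hea
    have hnca : ¬ F.att c a := fun h => F.no_E_attacker hD hdef hc h
    have hncc : ¬ F.att c c := F.defSet_cf hD hc hc
    have hbna : b ≠ a := by intro h; subst h; exact hnaa hb
    have hbnc : b ≠ c := by intro h; subst h; exact hncc hcb
    have hnac : ¬ F.att a c := by
      intro hac
      obtain ⟨Xc, hXc, hcomp⟩ := F.exists_of_mem_defSet hc
      have hY : ((some c, a) : Option A × A) ∈ F.dgn :=
        Or.inr (Or.inl ⟨c, rfl, hcAR, ha,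
          fun h => h.2 a (by simp) c (by simp) hac, b, hbAR, hbnc, hbna, hcb, hb⟩)
      have hdY : F.dAtt (some c, a) Xc := F.dAtt_of_comp (Or.inr rfl) hcomp hac
      obtain ⟨Z, hZ, hZY⟩ := hD.1.2 Xc hXc _ hY hdY
      obtain ⟨z, q, hcz, hcq, hq⟩ := F.exists_comp_of_dAtt hZY
      have hzE := F.mem_defSet_of hD.1.1.1 hZ hcz
      rcases hcq with h | h
      · have hqc : c = q := Option.some_inj.mp h
        rw [← hqc] at hq
        exact F.defSet_cf hD hzE hc hq
      · rw [← h] at hq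
        exact F.no_E_attacker hD hdef hzE hq
    have hcf : F.ConflictFree {c, a} := by
      refine ⟨?_, ?_⟩
      · intro x hx
        simp only [Set.mem_insert_iff, Set.mem_singleton_iff] at hx
        rcases hx with rfl | rfl
        · exact hcAR
        · exact ha
      · intro x hx y hy
        simp only [Set.mem_insert_iff, Set.mem_singleton_iff] at hx hy
        rcases hx with rfl | rfl <;> rcases hy with rfl | rfl
        · exact hncc
        · exact hnca
        · exact hnac
        · exact hnaa
    have hmem : ((some c, a) : Option A × A) ∈ F.nmd :=
      Or.inl ⟨c, rfl, hcAR, ha, hcf, b, hbAR, hcb, hb⟩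
    have hdd : F.DDefends D (some c, a) := by
      intro Y hY hatt
      obtain ⟨y, q, hcy, hcq, hq⟩ := F.exists_comp_of_dAtt hatt
      rcases hcq with h | h
      · have hqc : c = q := Option.some_inj.mp h
        rw [← hqc] at hq
        exact F.counter hD hc hY hcy hq
      · rw [← h] at hq
        obtain ⟨e, he, hey⟩ := hdef y hq
        obtain ⟨Xe, hXe, hce⟩ := F.exists_of_mem_defSet he
        exact ⟨Xe, hXe, F.dAtt_of_comp hce hcy hey⟩
    exact ⟨ha, Or.inl ⟨some c, hD.2 _ hmem hdd⟩⟩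

/-- Admissibility part: every member of `def(D)` is defended. -/
lemma lemmaL1 (hD : D ∈ F.CO) {a b : A} (ha : a ∈ F.defSet D) (hb : F.att b a) :
    ∃ c ∈ F.defSet D, F.att c b := by
  by_contra hcon
  push_neg at hcon
  obtain ⟨Xa, hXa, hca⟩ := F.exists_of_mem_defSet ha
  have hbAR : b ∈ F.AR := (F.att_mem b a hb).1
  have hnone : ((none, b) : Option A × A) ∉ F.dgn := by
    intro hY
    have hdY : F.dAtt (none, b) Xa := F.dAtt_of_comp (Or.inr rfl) hca hb
    obtain ⟨Z, hZ, hZY⟩ := hD.1.2 Xa hXa _ hY hdY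
    obtain ⟨z, q, hcz, hcq, hq⟩ := F.exists_comp_of_dAtt hZY
    rcases hcq with h | h
    · exact absurd h (by simp)
    · rw [← h] at hq
      exact hcon z (F.mem_defSet_of hD.1.1.1 hZ hcz) hq
  have hbinit : ¬ F.Initial b := fun h => hnone (Or.inl (Or.inr ⟨rfl, hbAR, h⟩))
  have hbself : ¬ (F.att b b ∨ ∃ γ, F.att γ γ ∧ F.att γ b) :=
    fun h => hnone (Or.inr (Or.inr ⟨rfl, hbAR, h⟩))
  obtain ⟨c₀, hc₀⟩ : ∃ c, F.att c b := by
    unfold AF.Initial at hbinit; push_neg at hbinit; exact hbinit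
  have hc₀AR : c₀ ∈ F.AR := (F.att_mem _ _ hc₀).1
  have hdefc₀ : F.Defends (F.defSet D) c₀ := by
    intro y hy
    have hyAR : y ∈ F.AR := (F.att_mem _ _ hy).1
    have hne1 : c₀ ≠ y := by
      intro h; subst h
      exact hbself (Or.inr ⟨c₀, hy, hc₀⟩)
    have hne2 : c₀ ≠ b := by
      intro h; subst h
      exact hbself (Or.inl hc₀)
    have hY : ((some y, b) : Option A × A) ∈ F.dgn :=
      F.node_mem_dgn hyAR hbAR hc₀AR hy hc₀ hne1 hne2
    have hdY : F.dAtt (some y, b) Xa := F.dAtt_of_comp (Or.inr rfl) hca hb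
    obtain ⟨Z, hZ, hZY⟩ := hD.1.2 Xa hXa _ hY hdY
    obtain ⟨z, q, hcz, hcq, hq⟩ := F.exists_comp_of_dAtt hZY
    have hzE := F.mem_defSet_of hD.1.1.1 hZ hcz
    rcases hcq with h | h
    · have hqy : y = q := Option.some_inj.mp h
      rw [← hqy] at hq
      exact ⟨z, hzE, hq⟩
    · rw [← h] at hq
      exact absurd hq (hcon z hzE)
  exact hcon c₀ (F.lemmaL2 hD hc₀AR hdefc₀) hc₀

end AF

/-- Theorem 1: for every complete extension of defenses `D` of the
defense graph of `F`, `def(D)` is a complete extension of `F`. -/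
theorem statement2 {A : Type*} (F : AF A) (D : Set (Option A × A))
    (hD : D ∈ F.CO) : F.defSet D ∈ F.co := by
  refine ⟨⟨⟨fun a ha => ha.1, fun a ha b hb => F.defSet_cf hD ha hb⟩,
    fun a ha b hb => F.lemmaL1 hD ha hb⟩,
    fun a ha hdef => F.lemmaL2 hD ha hdef⟩
end

section
/- Let F = (AR, att) be an argument graph. For every complete extension E ∈ co(F), the set d(E) is a complete extension of defenses of DG(F), i.e., d(E) ∈ CO(DG(F)). -/
open Set

/-!
Conflict-freeness and admissibility of `d(E)` transfer directly, since an attack between nodes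
of the defense graph is an attack between arguments occurring in them, and every `c ∈ E` is the
second component of some node of `d(E)`. For completeness, suppose `d(E)` defends `X` and some
`a` attacks an argument of `X` without being attacked by `E`. Then `[x, a]` attacks `X` for
every `x`. If `[⌀, a]` is a node, only an attack on `a` defeats it, which is impossible.
Otherwise `a` has an attacker `b`, neither `a` nor `b` is self-attacked, and each attacker `y`
of `b` gives a node `[y, a]`; `d(E)` can defeat it only by attacking `y` from `E`. Hence `E`
defends `b`, so `b ∈ E` attacks `a`, a contradiction.
-/

namespace AF

variable {A : Type*} (F : AF A) {E : Set A}

def args (p : Option A × A) : Set A := {a | a ∈ p.1 ∨ a = p.2}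

lemma dAtt_iff {p q : Option A × A} :
    F.dAtt p q ↔ ∃ u ∈ args p, ∃ v ∈ args q, F.att u v := by
  obtain ⟨x, α⟩ := p
  obtain ⟨y, β⟩ := q
  cases x <;> cases y <;> simp [dAtt, oatt, args, or_assoc]

lemma mem_dE_iff {p : Option A × A} : p ∈ F.dE E ↔ p ∈ F.nmd ∧ args p ⊆ E := by
  obtain ⟨x, α⟩ := p
  cases x
  · simp [dE, args]
  · simp [dE, args, Set.subset_def, or_imp, forall_and]
    tauto

lemma args_subset_AR_of_mem_nmd {p : Option A × A} (hp : p ∈ F.nmd) : args p ⊆ F.AR := by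
  rintro a (ha | rfl)
  · obtain ⟨α, hα, hαAR, -⟩ | ⟨hnone, -⟩ := hp
    · rw [Option.mem_def, hα, Option.some_inj] at ha
      exact ha ▸ hαAR
    · simp [hnone] at ha
  · obtain ⟨-, -, -, h, -⟩ | ⟨-, h, -⟩ := hp <;> exact h

lemma none_mem_dgn {a : A} (ha : a ∈ F.AR)
    (h : F.Initial a ∨ F.att a a ∨ ∃ g, F.att g g ∧ F.att g a) : (none, a) ∈ F.dgn := by
  rcases h with hinit | hself
  · exact Or.inl (Or.inr ⟨rfl, ha, hinit⟩)
  · exact Or.inr (Or.inr ⟨rfl, ha, hself⟩)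

lemma some_mem_dgn {y b a : A} (hyb : F.att y b) (hba : F.att b a)
    (hbb : ¬ F.att b b) (haa : ¬ F.att a a) : (some y, a) ∈ F.dgn := by
  have hyAR := (F.att_mem y b hyb).1
  obtain ⟨hbAR, haAR⟩ := F.att_mem b a hba
  by_cases hcf : F.ConflictFree {y, a}
  · exact Or.inl (Or.inl ⟨y, rfl, hyAR, haAR, hcf, b, hbAR, hyb, hba⟩)
  · refine Or.inr (Or.inl ⟨y, rfl, hyAR, haAR, hcf, b, hbAR, ?_, ?_, hyb, hba⟩)
    · rintro rfl; exact hbb hyb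
    · rintro rfl; exact haa hba

lemma exists_att_fst_of_dAtt_dE {Z : Option A × A} (hZ : Z ∈ F.dE E) {x : Option A} {a : A}
    (hZx : F.dAtt Z (x, a)) (ha : ∀ c ∈ E, ¬ F.att c a) : ∃ c ∈ E, ∃ y ∈ x, F.att c y := by
  obtain ⟨u, hu, v, hv | rfl, huv⟩ := (F.dAtt_iff).1 hZx
  · exact ⟨u, ((F.mem_dE_iff).1 hZ).2 hu, v, hv, huv⟩
  · exact absurd huv (ha u (((F.mem_dE_iff).1 hZ).2 hu))

variable {F}

lemma ConflictFree.subset {S : Set A} (hE : F.ConflictFree E) (hS : S ⊆ E) :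
    F.ConflictFree S :=
  ⟨hS.trans hE.1, fun a ha b hb => hE.2 a (hS ha) b (hS hb)⟩

lemma ConflictFree.dConflictFree_dE (hE : F.ConflictFree E) : F.DConflictFree (F.dE E) := by
  refine ⟨fun p hp => hp.1, fun X hX Y hY hXY => ?_⟩
  obtain ⟨u, hu, v, hv, huv⟩ := (F.dAtt_iff).1 hXY
  exact hE.2 u (((F.mem_dE_iff).1 hX).2 hu) v (((F.mem_dE_iff).1 hY).2 hv) huv

lemma Admissible.exists_mem_dE_snd_eq (hE : F.Admissible E) {c : A} (hc : c ∈ E) :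
    ∃ Z ∈ F.dE E, Z.2 = c := by
  have hsub := hE.1.1
  by_cases hinit : F.Initial c
  · exact ⟨(none, c), ⟨Or.inr ⟨rfl, hsub hc, hinit⟩, Or.inl rfl, hc⟩, rfl⟩
  obtain ⟨g, hgc⟩ := not_forall_not.1 hinit
  obtain ⟨d, hd, hdg⟩ := hE.2 c hc g hgc
  have hcf := hE.1.subset (Set.pair_subset hd hc)
  exact ⟨(some d, c), ⟨Or.inl ⟨d, rfl, hsub hd, hsub hc, hcf, g, (F.att_mem g c hgc).1, hdg, hgc⟩,
    Or.inr ⟨d, hd, rfl⟩, hc⟩, rfl⟩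

lemma Admissible.exists_dE_dAtt (hE : F.Admissible E) {c t : A} (hc : c ∈ E)
    {Y : Option A × A} (ht : t ∈ args Y) (hct : F.att c t) : ∃ Z ∈ F.dE E, F.dAtt Z Y := by
  obtain ⟨Z, hZ, rfl⟩ := hE.exists_mem_dE_snd_eq hc
  exact ⟨Z, hZ, (F.dAtt_iff).2 ⟨Z.2, Or.inr rfl, t, ht, hct⟩⟩

lemma Admissible.dDefends_dE (hE : F.Admissible E) {X : Option A × A} (hX : X ∈ F.dE E) :
    F.DDefends (F.dE E) X := by
  intro Y _ hYX
  obtain ⟨t, ht, v, hv, htv⟩ := (F.dAtt_iff).1 hYX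
  obtain ⟨c, hc, hct⟩ := hE.2 v (((F.mem_dE_iff).1 hX).2 hv) t htv
  exact hE.exists_dE_dAtt hc ht hct

lemma Complete.exists_att_of_dDefends (hE : F.Complete E) {X : Option A × A}
    (hX : F.DDefends (F.dE E) X) {a u : A} (hu : u ∈ args X) (hau : F.att a u) :
    ∃ c ∈ E, F.att c a := by
  by_contra! hnot
  have hattX : ∀ x : Option A, F.dAtt (x, a) X :=
    fun x => (F.dAtt_iff).2 ⟨a, Or.inr rfl, u, hu, hau⟩
  by_cases hnone : F.Initial a ∨ F.att a a ∨ ∃ g, F.att g g ∧ F.att g a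
  · obtain ⟨Z, hZ, hZa⟩ := hX _ (F.none_mem_dgn (F.att_mem a u hau).1 hnone) (hattX none)
    obtain ⟨-, -, y, hy, -⟩ := F.exists_att_fst_of_dAtt_dE hZ hZa hnot
    exact Option.not_mem_none y hy
  push Not at hnone
  obtain ⟨hinit, haa, hsa⟩ := hnone
  obtain ⟨b, hba⟩ := not_forall_not.1 hinit
  have hbb : ¬ F.att b b := fun hbb => hsa b hbb hba
  have hdefb : F.Defends E b := by
    intro y hyb
    obtain ⟨Z, hZ, hZya⟩ := hX _ (F.some_mem_dgn hyb hba hbb haa) (hattX (some y))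
    obtain ⟨c, hc, y', hy', hcy⟩ := F.exists_att_fst_of_dAtt_dE hZ hZya hnot
    rw [Option.mem_def, Option.some_inj] at hy'
    exact ⟨c, hc, hy' ▸ hcy⟩
  exact hnot b (hE.2 b (F.att_mem b a hba).1 hdefb) hba

lemma Complete.mem_dE_of_dDefends (hE : F.Complete E) {X : Option A × A} (hXn : X ∈ F.nmd)
    (hX : F.DDefends (F.dE E) X) : X ∈ F.dE E :=
  (F.mem_dE_iff).2 ⟨hXn, fun u hu => hE.2 u (F.args_subset_AR_of_mem_nmd hXn hu)
    fun _ hau => hE.exists_att_of_dDefends hX hu hau⟩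

end AF

/-- Theorem 2: for every complete extension `E` of `F`,
`d(E)` is a complete extension of defenses of the defense graph of `F`. -/
theorem statement3 {A : Type*} (F : AF A) (E : Set A)
    (hE : E ∈ F.co) : F.dE E ∈ F.CO :=
  ⟨⟨hE.1.1.dConflictFree_dE, fun _ hX => hE.1.dDefends_dE hX⟩,
    fun _ hXn hX => hE.mem_dE_of_dDefends hXn hX⟩
end

section
/- Let F = (AR, att) be an argument graph. For every grounded extension of defenses D ∈ GR(DG(F)), the set def(D) is a grounded extension of F, i.e., def(D) ∈ gr(F). -/
open Set

section Statement4Aux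

open AF

variable {A : Type*} (F : AF A)

private def Phi (E : Set A) : Set A := {a | a ∈ F.AR ∧ F.Defends E a}

private def Psi (S : Set (Option A × A)) : Set (Option A × A) :=
  {X | X ∈ F.nmd ∧ F.DDefends S X}

private lemma Defends_mono {E E' : Set A} (h : E ⊆ E') {a : A}
    (hd : F.Defends E a) : F.Defends E' a := by
  intro b hb
  obtain ⟨c, hc, hcb⟩ := hd b hb
  exact ⟨c, h hc, hcb⟩

private lemma Phi_mono {E E' : Set A} (h : E ⊆ E') : Phi F E ⊆ Phi F E' :=
  fun a ha => ⟨ha.1, Defends_mono F h ha.2⟩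

private lemma DDefends_mono {S S' : Set (Option A × A)} (h : S ⊆ S')
    {X : Option A × A} (hd : F.DDefends S X) : F.DDefends S' X := by
  intro Y hY hYX
  obtain ⟨Z, hZ, hZY⟩ := hd Y hY hYX
  exact ⟨Z, h hZ, hZY⟩

private lemma Psi_mono {S S' : Set (Option A × A)} (h : S ⊆ S') :
    Psi F S ⊆ Psi F S' := fun X hX => ⟨hX.1, DDefends_mono F h hX.2⟩

private def iterE (n : ℕ) : Set A := (Phi F)^[n] ∅

private def iterD (n : ℕ) : Set (Option A × A) := (Psi F)^[n] ∅

private lemma iterE_succ (n : ℕ) : iterE F (n + 1) = Phi F (iterE F n) :=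
  Function.iterate_succ_apply' _ _ _

private lemma iterD_succ (n : ℕ) : iterD F (n + 1) = Psi F (iterD F n) :=
  Function.iterate_succ_apply' _ _ _

private lemma iterE_mono : ∀ n, iterE F n ⊆ iterE F (n + 1) := by
  intro n
  induction n with
  | zero => intro a ha; exact absurd ha (Set.notMem_empty a)
  | succ k ih => rw [iterE_succ, iterE_succ]; exact Phi_mono F ih

private lemma iterD_mono : ∀ n, iterD F n ⊆ iterD F (n + 1) := by
  intro n
  induction n with
  | zero => intro a ha; exact absurd ha (Set.notMem_empty a)
  | succ k ih => rw [iterD_succ, iterD_succ]; exact Psi_mono F ih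

private lemma iterE_subset_AR : ∀ n, iterE F n ⊆ F.AR := by
  intro n
  cases n with
  | zero => intro a ha; exact absurd ha (Set.notMem_empty a)
  | succ k => rw [iterE_succ]; exact fun a ha => ha.1

private lemma iterD_subset_nmd : ∀ n, iterD F n ⊆ F.nmd := by
  intro n
  cases n with
  | zero => intro a ha; exact absurd ha (Set.notMem_empty a)
  | succ k => rw [iterD_succ]; exact fun a ha => ha.1

private lemma iterE_adm : ∀ n, F.Admissible (iterE F n) := by
  intro n
  induction n with
  | zero =>
    exact ⟨⟨fun a ha => absurd ha (Set.notMem_empty a),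
      fun a ha => absurd ha (Set.notMem_empty a)⟩,
      fun a ha => absurd ha (Set.notMem_empty a)⟩
  | succ k ih =>
    have hsub := iterE_mono F k
    rw [iterE_succ] at *
    refine ⟨⟨fun a ha => ha.1, ?_⟩, ?_⟩
    · intro a ha b hb hab
      obtain ⟨c, hc, hca⟩ := hb.2 a hab
      obtain ⟨d, hd, hdc⟩ := ha.2 c hca
      exact ih.1.2 d hd c hc hdc
    · intro a ha
      exact Defends_mono F hsub ha.2

private lemma iterD_adm : ∀ n, F.DConflictFree (iterD F n) ∧
    ∀ X ∈ iterD F n, F.DDefends (iterD F n) X := by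
  intro n
  induction n with
  | zero =>
    exact ⟨⟨fun a ha => absurd ha (Set.notMem_empty a),
      fun a ha => absurd ha (Set.notMem_empty a)⟩,
      fun a ha => absurd ha (Set.notMem_empty a)⟩
  | succ k ih =>
    have hsub := iterD_mono F k
    rw [iterD_succ] at *
    refine ⟨⟨fun X hX => hX.1, ?_⟩, ?_⟩
    · intro X hX Y hY hXY
      obtain ⟨Z, hZ, hZX⟩ := hY.2 X (Or.inl hX.1) hXY
      obtain ⟨W, hW, hWZ⟩ := hX.2 Z (Or.inl (iterD_subset_nmd F k hZ)) hZX
      exact ih.1.2 W hW Z hZ hWZ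
    · intro X hX
      exact DDefends_mono F hsub hX.2

private lemma chain_stab {α : Type*} {S : Set α} (hS : S.Finite) (f : ℕ → Set α)
    (hmono : ∀ n, f n ⊆ f (n + 1)) (hsub : ∀ n, f n ⊆ S) :
    ∃ m, f (m + 1) = f m := by
  by_contra h
  push_neg at h
  have key : ∀ n, n ≤ (f n).ncard := by
    intro n
    induction n with
    | zero => omega
    | succ k ihk =>
      have hlt : (f k).ncard < (f (k + 1)).ncard :=
        Set.ncard_lt_ncard (ssubset_of_subset_of_ne (hmono k) (Ne.symm (h k)))
          (hS.subset (hsub (k + 1)))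
      omega
    
  have h1 := key (S.ncard + 1)
  have h2 : (f (S.ncard + 1)).ncard ≤ S.ncard := Set.ncard_le_ncard (hsub _) hS
  omega

private lemma nmd_finite : F.nmd.Finite := by
  have h : F.nmd ⊆ (insert none (some '' F.AR)) ×ˢ F.AR := by
    rintro ⟨x, b⟩ (⟨α, h1, h2, h3, _⟩ | ⟨h1, h2, _⟩)
    · exact ⟨Set.mem_insert_iff.mpr (Or.inr ⟨α, h2, h1.symm⟩), h3⟩
    · exact ⟨Set.mem_insert_iff.mpr (Or.inl h1), h2⟩
  exact (((F.finite.image some).insert none).prod F.finite).subset h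

-- a node attacking via a component
private lemma datt_of_comp {Z Y : Option A × A} {f e : A}
    (hZ : Z.1 = some f ∨ Z.2 = f) (hY : Y.1 = some e ∨ Y.2 = e)
    (h : F.att f e) : F.dAtt Z Y := by
  rcases hZ with hZ | hZ <;> rcases hY with hY | hY
  · exact Or.inl ⟨f, e, hZ, hY, h⟩
  · exact Or.inr (Or.inl ⟨f, e, hZ, by rw [hY], h⟩)
  · exact Or.inr (Or.inr (Or.inl ⟨f, e, by rw [hZ], hY, h⟩))
  · exact Or.inr (Or.inr (Or.inr (by rw [hZ, hY]; exact h)))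

private lemma comp_att {X Y : Option A × A} {e : A}
    (hY : Y.1 = some e ∨ Y.2 = e)
    (heX : F.att e X.2 ∨ ∃ α, X.1 = some α ∧ F.att e α) : F.dAtt Y X := by
  rcases heX with h | ⟨α, hα, h⟩
  · exact datt_of_comp F hY (Or.inr rfl) h
  · exact datt_of_comp F hY (Or.inl hα) h

private lemma dAtt_extract {Z Y : Option A × A} (h : F.dAtt Z Y) :
    ∃ f e, (Z.1 = some f ∨ Z.2 = f) ∧ (Y.1 = some e ∨ Y.2 = e) ∧ F.att f e := by
  rcases h with ⟨a, b, h1, h2, h3⟩ | ⟨a, b, h1, h2, h3⟩ | ⟨a, b, h1, h2, h3⟩ | h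
  · exact ⟨a, b, Or.inl h1, Or.inl h2, h3⟩
  · exact ⟨a, b, Or.inl h1, Or.inr (Option.some_injective _ h2), h3⟩
  · exact ⟨a, b, Or.inr (Option.some_injective _ h1), Or.inl h2, h3⟩
  · exact ⟨Z.2, Y.2, Or.inr rfl, Or.inr rfl, h⟩

/-- KEY LEMMA (direction 1 core): if all components of all members of `S` are in `G`,
`G` is "complete enough", `X` is a defense defended by `S`, and `e` attacks a
component of `X`, then `G` attacks `e`. -/
private lemma counter_att (G : Set A)
    (hGc : ∀ a ∈ F.AR, F.Defends G a → a ∈ G)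
    (S : Set (Option A × A))
    (hScomp : ∀ Z ∈ S, Z.2 ∈ G ∧ ∀ α, Z.1 = some α → α ∈ G)
    (X : Option A × A) (hXdd : F.DDefends S X)
    (e : A) (heX : F.att e X.2 ∨ ∃ α, X.1 = some α ∧ F.att e α) :
    ∃ f ∈ G, F.att f e := by
  have heAR : e ∈ F.AR := by
    rcases heX with h | ⟨α, _, h⟩
    · exact (F.att_mem _ _ h).1
    · exact (F.att_mem _ _ h).1
  have extract : ∀ Z : Option A × A, F.dAtt Z ((none : Option A), e) →
      ∃ f, (Z.1 = some f ∨ Z.2 = f) ∧ F.att f e := by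
    intro Z hZ
    obtain ⟨f, e', hf, he', hfe⟩ := dAtt_extract F hZ
    rcases he' with h | h
    · exact absurd h (by simp)
    · have he2 : e' = e := h.symm
      exact ⟨f, hf, he2 ▸ hfe⟩
  have getG : ∀ Z ∈ S, ∀ f : A, (Z.1 = some f ∨ Z.2 = f) → f ∈ G := by
    intro Z hZ f hf
    rcases hf with h | h
    · exact (hScomp Z hZ).2 f h
    · exact h ▸ (hScomp Z hZ).1
  by_cases hsc : F.att e e ∨ ∃ γ, F.att γ γ ∧ F.att γ e
  · -- ⟨⌀, e⟩ is a DoD, so it attacks X and S counterattacks it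
    have hY₀ : ((none : Option A), e) ∈ F.dgn :=
      Or.inr (Or.inr ⟨rfl, heAR, hsc⟩)
    obtain ⟨Z, hZ, hZY⟩ := hXdd _ hY₀ (comp_att F (Or.inr rfl) heX)
    obtain ⟨f, hf, hfe⟩ := extract Z hZY
    exact ⟨f, getG Z hZ f hf, hfe⟩
  · by_cases hini : F.Initial e
    · -- ⟨⌀, e⟩ is a defense; its counterattacker attacks e : absurd
      have hY₀ : ((none : Option A), e) ∈ F.dgn :=
        Or.inl (Or.inr ⟨rfl, heAR, hini⟩)
      obtain ⟨Z, hZ, hZY⟩ := hXdd _ hY₀ (comp_att F (Or.inr rfl) heX)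
      obtain ⟨f, hf, hfe⟩ := extract Z hZY
      exact absurd hfe (hini f)
    · -- e has an attacker b; show b ∈ G
      simp only [AF.Initial, not_forall, not_not] at hini
      obtain ⟨b, hb⟩ := hini
      by_contra hno
      push_neg at hno
      have hbG : b ∈ G := by
        apply hGc b (F.att_mem b e hb).1
        intro e₁ he₁
        have hne1 : b ≠ e₁ := by
          rintro rfl
          exact hsc (Or.inr ⟨b, he₁, hb⟩)
        have hne2 : b ≠ e := by
          rintro rfl
          exact hsc (Or.inl hb)
        have he₁AR : e₁ ∈ F.AR := (F.att_mem _ _ he₁).1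
        have hbAR : b ∈ F.AR := (F.att_mem _ _ hb).1
        have hY₁ : ((some e₁ : Option A), e) ∈ F.dgn := by
          by_cases hcf : F.ConflictFree {e₁, e}
          · exact Or.inl (Or.inl ⟨e₁, rfl, he₁AR, heAR, hcf, b, hbAR, he₁, hb⟩)
          · exact Or.inr (Or.inl ⟨e₁, rfl, he₁AR, heAR, hcf, b, hbAR, hne1, hne2, he₁, hb⟩)
        obtain ⟨Z, hZ, hZY⟩ := hXdd _ hY₁ (comp_att F (Or.inr rfl) heX)
        obtain ⟨f, e', hf, he', hfe⟩ := dAtt_extract F hZY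
        have hfG : f ∈ G := getG Z hZ f hf
        rcases he' with h | h
        · -- e' = e₁
          refine ⟨f, hfG, ?_⟩
          have : e' = e₁ := (Option.some_injective _ h.symm)
          rwa [this] at hfe
        · -- e' = e : contradiction with hno
          have he2 : e' = e := h.symm
          exact absurd (he2 ▸ hfe) (hno f hfG)
      exact hno b hbG hb

/-- Direction 1: components of members of `iterD` are in `G`. -/
private lemma iterD_comp_in_G (G : Set A)
    (hGc : ∀ a ∈ F.AR, F.Defends G a → a ∈ G) :
    ∀ n, ∀ Z ∈ iterD F n, Z.2 ∈ G ∧ ∀ α, Z.1 = some α → α ∈ G := by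
  intro n
  induction n with
  | zero => intro Z hZ; exact absurd hZ (Set.notMem_empty Z)
  | succ k ih =>
    intro Z hZ
    rw [iterD_succ] at hZ
    obtain ⟨hZnmd, hZdd⟩ := hZ
    have h2AR : Z.2 ∈ F.AR := by
      rcases hZnmd with ⟨α, _, _, h, _⟩ | ⟨_, h, _⟩ <;> exact h
    constructor
    · apply hGc Z.2 h2AR
      intro e he
      exact counter_att F G hGc (iterD F k) ih Z hZdd e (Or.inl he)
    · intro α hα
      have hαAR : α ∈ F.AR := by
        rcases hZnmd with ⟨β, h1, h2, _⟩ | ⟨h1, _⟩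
        · rw [h1, Option.some_inj] at hα; exact hα ▸ h2
        · rw [h1] at hα; exact absurd hα (by simp)
      apply hGc α hαAR
      intro e he
      exact counter_att F G hGc (iterD F k) ih Z hZdd e (Or.inr ⟨α, hα, he⟩)

private lemma cf_pair {E : Set A} (hE : F.ConflictFree E) {x y : A}
    (hx : x ∈ E) (hy : y ∈ E) : F.ConflictFree {x, y} := by
  constructor
  · rintro z (rfl | rfl)
    · exact hE.1 hx
    · exact hE.1 hy
  · rintro a (rfl | rfl) b (rfl | rfl)
    · exact hE.2 _ hx _ hx
    · exact hE.2 _ hx _ hy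
    · exact hE.2 _ hy _ hx
    · exact hE.2 _ hy _ hy

end Statement4Aux
/-- for every grounded extension of defenses `D`,
`def(D)` is a grounded extension of `F`. -/
theorem statement4 {A : Type*} (F : AF A) (D : Set (Option A × A))
    (hD : D ∈ F.GR) : F.defSet D ∈ F.gr := by
  classical
  obtain ⟨hDcomp, hDleast⟩ := hD
  -- stabilize the iterations
  obtain ⟨mE, hmE⟩ := chain_stab F.finite (iterE F) (iterE_mono F) (iterE_subset_AR F)
  obtain ⟨mD, hmD⟩ := chain_stab (nmd_finite F) (iterD F) (iterD_mono F) (iterD_subset_nmd F)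
  set G : Set A := iterE F mE with hGdef
  have hGfix : Phi F G = G := by rw [hGdef, ← iterE_succ]; exact hmE
  have hGadm : F.Admissible G := iterE_adm F mE
  have hGc : ∀ a ∈ F.AR, F.Defends G a → a ∈ G := by
    intro a ha hd
    have : a ∈ Phi F G := ⟨ha, hd⟩
    rwa [hGfix] at this
  have hGcomplete : F.Complete G := ⟨hGadm, hGc⟩
  -- iterE n ⊆ any complete extension
  have hEleast : ∀ E', F.Complete E' → ∀ n, iterE F n ⊆ E' := by
    intro E' hE' n
    induction n with
    | zero => intro a ha; exact absurd ha (Set.notMem_empty a)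
    | succ k ih =>
      rw [iterE_succ]
      intro a ha
      exact hE'.2 a ha.1 (Defends_mono F ih ha.2)
  have hGgr : G ∈ F.gr := ⟨hGcomplete, fun E' hE' => hEleast E' hE' mE⟩
  -- iterE n ⊆ G
  have hiterE_sub_G : ∀ n, iterE F n ⊆ G := hEleast G hGcomplete
  -- D equals the stabilized iterD
  have hDfixcomp : F.DComplete (iterD F mD) := by
    refine ⟨⟨(iterD_adm F mD).1, (iterD_adm F mD).2⟩, ?_⟩
    intro X hX hXd
    have : X ∈ Psi F (iterD F mD) := ⟨hX, hXd⟩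
    rwa [← iterD_succ, hmD] at this
  have hDsub : ∀ n, iterD F n ⊆ D := by
    intro n
    induction n with
    | zero => intro Z hZ; exact absurd hZ (Set.notMem_empty Z)
    | succ k ih =>
      rw [iterD_succ]
      intro Z hZ
      exact hDcomp.2 Z hZ.1 (DDefends_mono F ih hZ.2)
  have hDeq : D = iterD F mD :=
    Set.Subset.antisymm (hDleast _ hDfixcomp) (hDsub mD)
  -- direction 1: defSet D ⊆ G
  have hcomp := iterD_comp_in_G F G hGc mD
  have hdir1 : F.defSet D ⊆ G := by
    rintro a ⟨haAR, (⟨x, hx⟩ | ⟨b, hb⟩)⟩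
    · exact (hcomp (x, a) (hDeq ▸ hx)).1
    · exact (hcomp (some a, b) (hDeq ▸ hb)).2 a rfl
  -- direction 2: G ⊆ defSet D
  have hdir2 : ∀ n, iterE F n ⊆ F.defSet D := by
    intro n
    induction n with
    | zero => intro a ha; exact absurd ha (Set.notMem_empty a)
    | succ k ih =>
      rw [iterE_succ]
      rintro a ⟨haAR, hadef⟩
      by_cases hini : F.Initial a
      · -- ⟨⌀, a⟩ is an unattacked defense
        have hXnmd : ((none : Option A), a) ∈ F.nmd := Or.inr ⟨rfl, haAR, hini⟩
        have hXD : ((none : Option A), a) ∈ D := by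
          apply hDcomp.2 _ hXnmd
          intro Y hY hYX
          exfalso
          obtain ⟨f, e, hf, he, hfe⟩ := dAtt_extract F hYX
          rcases he with h | h
          · exact absurd h (by simp)
          · have he2 : e = a := h.symm
            exact hini f (he2 ▸ hfe)
        exact ⟨haAR, Or.inl ⟨none, hXD⟩⟩
      · -- build defense ⟨c₀, a⟩
        simp only [AF.Initial, not_forall, not_not] at hini
        obtain ⟨b₀, hb₀⟩ := hini
        obtain ⟨c₀, hc₀, hc₀b₀⟩ := hadef b₀ hb₀
        have hc₀G : c₀ ∈ G := hiterE_sub_G k hc₀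
        have haG : a ∈ G := hiterE_sub_G (k + 1) (by rw [iterE_succ]; exact ⟨haAR, hadef⟩)
        have hcf : F.ConflictFree {c₀, a} := cf_pair F hGadm.1 hc₀G haG
        have hXnmd : ((some c₀ : Option A), a) ∈ F.nmd :=
          Or.inl ⟨c₀, rfl, iterE_subset_AR F k hc₀, haAR, hcf, b₀,
            (F.att_mem _ _ hb₀).1, hc₀b₀, hb₀⟩
        have hXD : ((some c₀ : Option A), a) ∈ D := by
          apply hDcomp.2 _ hXnmd
          intro Y hY hYX
          obtain ⟨e, e', he, he', hee'⟩ := dAtt_extract F hYX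
          -- e is a component of Y attacking c₀ or a
          have hatt : F.att e c₀ ∨ F.att e a := by
            rcases he' with h | h
            · have hc : c₀ = e' := Option.some_inj.mp h
              exact Or.inl (by rwa [← hc] at hee')
            · have hc : a = e' := h
              exact Or.inr (by rwa [← hc] at hee')
          have hf : ∃ f ∈ iterE F k, F.att f e := by
            rcases hatt with h | h
            · exact (iterE_adm F k).2 c₀ hc₀ e h
            · exact hadef e h
          obtain ⟨f, hfk, hfe⟩ := hf
          obtain ⟨hfAR, hfD⟩ := ih hfk
          rcases hfD with ⟨x, hx⟩ | ⟨b, hb⟩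
          · exact ⟨(x, f), hx, datt_of_comp F (Or.inr rfl) he hfe⟩
          · exact ⟨(some f, b), hb, datt_of_comp F (Or.inl rfl) he hfe⟩
        exact ⟨haAR, Or.inl ⟨some c₀, hXD⟩⟩
  have : F.defSet D = G := Set.Subset.antisymm hdir1 (hdir2 mE)
  rw [this]
  exact hGgr
end

section
/- Let F = (AR, att) be an argument graph. For every stable extension of defenses D ∈ ST(DG(F)), the set def(D) is a stable extension of F, i.e., def(D) ∈ st(F). -/
open Set

/-- for every stable extension of defenses `D`,
`def(D)` is a stable extension of `F`. -/
theorem statement6 {A : Type*} (F : AF A) (D : Set (Option A × A))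
    (hD : D ∈ F.ST) : F.defSet D ∈ F.st := by
  obtain ⟨⟨hsub, hnoatt⟩, hstab⟩ := hD
  have hmem2 : ∀ x b, (x, b) ∈ D → b ∈ F.defSet D := by
    intro x b h
    have hb : b ∈ F.AR := by
      rcases hsub h with ⟨α, _, _, h2, _⟩ | ⟨_, h2, _⟩ <;> exact h2
    exact ⟨hb, Or.inl ⟨x, h⟩⟩
  have hmem1 : ∀ a b, ((some a : Option A), b) ∈ D → a ∈ F.defSet D := by
    intro a b h
    have ha : a ∈ F.AR := by
      rcases hsub h with ⟨α, h1, h2, _⟩ | ⟨h1, _⟩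
      · injection h1 with h1; subst h1; exact h2
      · simp at h1
    exact ⟨ha, Or.inr ⟨b, h⟩⟩
  have hDcf : ∀ u ∈ F.defSet D, ∀ v ∈ F.defSet D, ¬ F.att u v := by
    rintro u ⟨_, hu⟩ v ⟨_, hv⟩ hatt
    rcases hu with ⟨x, hx⟩ | ⟨b, hb⟩ <;> rcases hv with ⟨y, hy⟩ | ⟨c, hc⟩
    · exact hnoatt _ hx _ hy (Or.inr (Or.inr (Or.inr hatt)))
    · exact hnoatt _ hx _ hc (Or.inr (Or.inr (Or.inl ⟨u, v, rfl, rfl, hatt⟩)))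
    · exact hnoatt _ hb _ hy (Or.inr (Or.inl ⟨u, v, rfl, rfl, hatt⟩))
    · exact hnoatt _ hb _ hc (Or.inl ⟨u, v, rfl, rfl, hatt⟩)
  have hZ : ∀ Z ∈ D, ∀ x β, F.dAtt Z (x, β) →
      (∃ c, x = some c ∧ ∃ e ∈ F.defSet D, F.att e c) ∨ (∃ e ∈ F.defSet D, F.att e β) := by
    rintro ⟨z1, z2⟩ hZD x β hatt
    rcases hatt with h | h | h | h
    · obtain ⟨u, v, hu, hv, huv⟩ := h
      exact Or.inl ⟨v, hv, u, hmem1 u z2 (hu ▸ hZD), huv⟩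
    · obtain ⟨u, v, hu, hv, huv⟩ := h
      injection hv with hv; subst hv
      exact Or.inr ⟨u, hmem1 u z2 (hu ▸ hZD), huv⟩
    · obtain ⟨u, v, hu, hv, huv⟩ := h
      injection hu with hu; subst hu
      exact Or.inl ⟨v, hv, z2, hmem2 z1 z2 hZD, huv⟩
    · exact Or.inr ⟨z2, hmem2 z1 z2 hZD, h⟩
  refine ⟨⟨fun a ha => ha.1, hDcf⟩, ?_⟩
  intro a haAR haD
  by_contra hno
  push_neg at hno
  by_cases hinit : F.Initial a
  · have hmemn : ((none : Option A), a) ∈ F.dgn := Or.inl (Or.inr ⟨rfl, haAR, hinit⟩)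
    by_cases hin : ((none : Option A), a) ∈ D
    · exact haD (hmem2 _ _ hin)
    · obtain ⟨Z, hZD, hZa⟩ := hstab _ hmemn hin
      rcases hZ Z hZD none a hZa with ⟨c, hc, _⟩ | ⟨e, _, he⟩
      · simp at hc
      · exact hinit e he
  by_cases hsa : F.att a a ∨ ∃ γ, F.att γ γ ∧ F.att γ a
  · have hmemn : ((none : Option A), a) ∈ F.dgn := Or.inr (Or.inr ⟨rfl, haAR, hsa⟩)
    have hin : ((none : Option A), a) ∉ D := by
      intro hin
      rcases hsub hin with ⟨α, h1, _⟩ | ⟨_, _, h3⟩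
      · simp at h1
      · rcases hsa with h | ⟨γ, _, hg⟩
        · exact h3 a h
        · exact h3 γ hg
    obtain ⟨Z, hZD, hZa⟩ := hstab _ hmemn hin
    rcases hZ Z hZD none a hZa with ⟨c, hc, _⟩ | ⟨e, heD, he⟩
    · simp at hc
    · exact hno e heD he
  push_neg at hsa
  obtain ⟨haa, hsag⟩ := hsa
  have hex : ∃ b, F.att b a := by
    unfold AF.Initial at hinit; push_neg at hinit; exact hinit
  obtain ⟨b, hba⟩ := hex
  obtain ⟨hbAR, _⟩ := F.att_mem b a hba
  have hbb : ¬ F.att b b := fun h => hsag b h hba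
  have hbna : b ≠ a := by intro h; subst h; exact haa hba
  by_cases hbinit : F.Initial b
  · have hmemn : ((none : Option A), b) ∈ F.dgn := Or.inl (Or.inr ⟨rfl, hbAR, hbinit⟩)
    by_cases hin : ((none : Option A), b) ∈ D
    · exact hno b (hmem2 _ _ hin) hba
    · obtain ⟨Z, hZD, hZb⟩ := hstab _ hmemn hin
      rcases hZ Z hZD none b hZb with ⟨c, hc, _⟩ | ⟨e, _, he⟩
      · simp at hc
      · exact hbinit e he
  · have hexc : ∃ c, F.att c b := by
      unfold AF.Initial at hbinit; push_neg at hbinit; exact hbinit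
    obtain ⟨c, hcb⟩ := hexc
    have hstar : ∀ e, F.att e b → ∃ f ∈ F.defSet D, F.att f e := by
      intro e heb
      obtain ⟨heAR, _⟩ := F.att_mem e b heb
      have hbe : b ≠ e := by intro h; subst h; exact hbb heb
      have hP : ((some e : Option A), a) ∈ F.dgn := by
        by_cases hcf : F.ConflictFree {e, a}
        · exact Or.inl (Or.inl ⟨e, rfl, heAR, haAR, hcf, b, hbAR, heb, hba⟩)
        · exact Or.inr (Or.inl ⟨e, rfl, heAR, haAR, hcf, b, hbAR, hbe, hbna, heb, hba⟩)
      by_cases hPin : ((some e : Option A), a) ∈ D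
      · exact absurd (hmem2 _ _ hPin) haD
      · obtain ⟨Z, hZD, hZP⟩ := hstab _ hP hPin
        rcases hZ Z hZD (some e) a hZP with ⟨c', hc', f, hfD, hfc⟩ | ⟨f, hfD, hfa⟩
        · injection hc' with h'; subst h'
          exact ⟨f, hfD, hfc⟩
        · exact absurd hfa (hno f hfD)
    obtain ⟨d, hdD, hdc⟩ := hstar c hcb
    have hdAR : d ∈ F.AR := hdD.1
    have hcd : c ≠ d := fun h => hDcf d hdD d hdD (h ▸ hdc)
    have hcnb : c ≠ b := by intro h; subst h; exact hbb hcb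
    have hQ : ((some d : Option A), b) ∈ F.dgn := by
      by_cases hcf : F.ConflictFree {d, b}
      · exact Or.inl (Or.inl ⟨d, rfl, hdAR, hbAR, hcf, c, (F.att_mem c b hcb).1, hdc, hcb⟩)
      · exact Or.inr (Or.inl ⟨d, rfl, hdAR, hbAR, hcf, c, (F.att_mem c b hcb).1, hcd, hcnb, hdc, hcb⟩)
    by_cases hQin : ((some d : Option A), b) ∈ D
    · exact hno b (hmem2 _ _ hQin) hba
    · obtain ⟨Z, hZD, hZQ⟩ := hstab _ hQ hQin
      rcases hZ Z hZD (some d) b hZQ with ⟨c', hc', f, hfD, hfc⟩ | ⟨f, hfD, hfb⟩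
      · injection hc' with h'; subst h'
        exact hDcf f hfD d hdD hfc
      · obtain ⟨g, hgD, hgf⟩ := hstar f hfb
        exact hDcf g hgD f hfD hgf
end

section
/- Let F = (AR, att) be an argument graph. For every preferred extension E ∈ pr(F), the set d(E) is a preferred extension of defenses of DG(F), i.e., d(E) ∈ PR(DG(F)). -/
open Set

section Aux

namespace AF

variable {A : Type*} {F : AF A}

/-- `a` is a component of the pair `X`. -/
def Comp (X : Option A × A) (a : A) : Prop := X.1 = some a ∨ X.2 = a

lemma dAtt_of_comp_s8 {X Y : Option A × A} {a b : A}
    (ha : Comp X a) (hb : Comp Y b) (hab : F.att a b) : F.dAtt X Y := by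
  rcases ha with ha | ha <;> rcases hb with hb | hb
  · exact Or.inl ⟨a, b, ha, hb, hab⟩
  · exact Or.inr (Or.inl ⟨a, Y.2, ha, rfl, by rw [hb]; exact hab⟩)
  · exact Or.inr (Or.inr (Or.inl ⟨X.2, b, rfl, hb, by rw [ha]; exact hab⟩))
  · exact Or.inr (Or.inr (Or.inr (by rw [ha, hb]; exact hab)))

lemma comp_of_dAtt {X Y : Option A × A} (h : F.dAtt X Y) :
    ∃ a b, Comp X a ∧ Comp Y b ∧ F.att a b := by
  rcases h with ⟨a, b, h1, h2, h3⟩ | ⟨a, b, h1, h2, h3⟩ | ⟨a, b, h1, h2, h3⟩ | h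
  · exact ⟨a, b, Or.inl h1, Or.inl h2, h3⟩
  · exact ⟨a, b, Or.inl h1, Or.inr (Option.some.inj h2), h3⟩
  · exact ⟨a, b, Or.inr (Option.some.inj h1), Or.inl h2, h3⟩
  · exact ⟨X.2, Y.2, Or.inr rfl, Or.inr rfl, h⟩

lemma comp_AR {X : Option A × A} (hX : X ∈ F.nmd) {a : A} (h : Comp X a) : a ∈ F.AR := by
  rcases hX with ⟨α, h1, hαAR, h2AR, _⟩ | ⟨h1, h2AR, _⟩ <;> rcases h with h | h
  · rw [h1] at h; obtain rfl := Option.some.inj h; exact hαAR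
  · rw [← h]; exact h2AR
  · rw [h1] at h; exact absurd h (by simp)
  · rw [← h]; exact h2AR

lemma cf_pair {a b : A} (ha : a ∈ F.AR) (hb : b ∈ F.AR) (h1 : ¬F.att a a)
    (h2 : ¬F.att a b) (h3 : ¬F.att b a) (h4 : ¬F.att b b) :
    F.ConflictFree {a, b} := by
  constructor
  · intro x hx
    simp only [Set.mem_insert_iff, Set.mem_singleton_iff] at hx
    rcases hx with rfl | rfl <;> assumption
  · intro x hx y hy
    simp only [Set.mem_insert_iff, Set.mem_singleton_iff] at hx hy
    rcases hx with rfl | rfl <;> rcases hy with rfl | rfl <;> assumption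

lemma pair_dgn {y γ b : A} (h1 : F.att y γ) (h2 : F.att γ b)
    (hγγ : ¬ F.att γ γ) (hbb : ¬ F.att b b) : ((some y, b) : Option A × A) ∈ F.dgn := by
  have hyAR := (F.att_mem _ _ h1).1
  have hγAR := (F.att_mem _ _ h1).2
  have hbAR := (F.att_mem _ _ h2).2
  by_cases hcf : F.ConflictFree {y, b}
  · exact Or.inl (Or.inl ⟨y, rfl, hyAR, hbAR, hcf, γ, hγAR, h1, h2⟩)
  · refine Or.inr (Or.inl ⟨y, rfl, hyAR, hbAR, hcf, γ, hγAR, ?_, ?_, h1, h2⟩)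
    · rintro rfl; exact hγγ h1
    · rintro rfl; exact hbb h2

lemma none_dgn {b : A} (hbAR : b ∈ F.AR)
    (h : F.att b b ∨ (∃ γ, F.att γ γ ∧ F.att γ b) ∨ F.Initial b) :
    ((none, b) : Option A × A) ∈ F.dgn := by
  rcases h with h | h | h
  · exact Or.inr (Or.inr ⟨rfl, hbAR, Or.inl h⟩)
  · exact Or.inr (Or.inr ⟨rfl, hbAR, Or.inr h⟩)
  · exact Or.inl (Or.inr ⟨rfl, hbAR, h⟩)

lemma dE_comp {E : Set A} {Z : Option A × A} (hZ : Z ∈ F.dE E) {c : A}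
    (hc : Comp Z c) : c ∈ E := by
  obtain ⟨_, h1, h2⟩ := hZ
  rcases hc with hc | hc
  · rcases h1 with h1 | ⟨a, haE, h1⟩
    · rw [h1] at hc; exact absurd hc (by simp)
    · rw [h1] at hc; obtain rfl := Option.some.inj hc; exact haE
  · rw [← hc]; exact h2

lemma exists_dE_snd {E : Set A} (hE : F.Complete E) {e : A} (he : e ∈ E) :
    ∃ Z ∈ F.dE E, Z.2 = e := by
  by_cases hinit : F.Initial e
  · exact ⟨(none, e), ⟨Or.inr ⟨rfl, hE.1.1.1 he, hinit⟩, Or.inl rfl, he⟩, rfl⟩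
  · simp only [AF.Initial, not_forall, not_not] at hinit
    obtain ⟨b, hb⟩ := hinit
    obtain ⟨c, hc, hcb⟩ := hE.1.2 e he b hb
    have hcAR := hE.1.1.1 hc
    have heAR := hE.1.1.1 he
    have hbAR := (F.att_mem _ _ hb).1
    refine ⟨(some c, e), ⟨Or.inl ⟨c, rfl, hcAR, heAR, ?_, b, hbAR, hcb, hb⟩,
      Or.inr ⟨c, hc, rfl⟩, he⟩, rfl⟩
    exact cf_pair hcAR heAR (hE.1.1.2 c hc c hc) (hE.1.1.2 c hc e he)
      (hE.1.1.2 e he c hc) (hE.1.1.2 e he e he)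

lemma mem_defSet_of_s8 {D : Set (Option A × A)} (hD : D ⊆ F.nmd) {Z : Option A × A}
    (hZ : Z ∈ D) {c : A} (hc : Comp Z c) : c ∈ F.defSet D := by
  refine ⟨comp_AR (hD hZ) hc, ?_⟩
  rcases hc with hc | hc
  · right; exact ⟨Z.2, by rw [← hc]; exact hZ⟩
  · left; exact ⟨Z.1, by rw [← hc]; exact hZ⟩

lemma host_of_defSet {D : Set (Option A × A)} {c : A} (hc : c ∈ F.defSet D) :
    ∃ Z ∈ D, Comp Z c := by
  rcases hc.2 with ⟨x, hx⟩ | ⟨b, hb⟩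
  · exact ⟨(x, c), hx, Or.inr rfl⟩
  · exact ⟨(some c, b), hb, Or.inl rfl⟩

lemma defSet_noatt {D : Set (Option A × A)} (hD : F.DConflictFree D) {a b : A}
    (ha : a ∈ F.defSet D) (hb : b ∈ F.defSet D) : ¬ F.att a b := by
  intro h
  obtain ⟨Za, hZa, hca⟩ := host_of_defSet ha
  obtain ⟨Zb, hZb, hcb⟩ := host_of_defSet hb
  exact hD.2 Za hZa Zb hZb (dAtt_of_comp_s8 hca hcb h)

lemma key1 {E : Set A} (hE : F.Complete E) {X : Option A × A}
    (hX : F.DDefends (F.dE E) X) {a b : A} (ha : Comp X a) (hb : F.att b a) :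
    ∃ e ∈ E, F.att e b := by
  have hbAR := (F.att_mem _ _ hb).1
  by_cases h0 : F.att b b ∨ (∃ γ, F.att γ γ ∧ F.att γ b) ∨ F.Initial b
  · obtain ⟨Z, hZ, hZY⟩ := hX (none, b) (none_dgn hbAR h0) (dAtt_of_comp_s8 (Or.inr rfl) ha hb)
    obtain ⟨c, d, hc, hd, hcd⟩ := comp_of_dAtt hZY
    have hdb : b = d := by
      rcases hd with hd | hd
      · exact absurd hd (by simp)
      · exact hd
    exact ⟨c, dE_comp hZ hc, by rw [hdb]; exact hcd⟩
  · push_neg at h0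
    obtain ⟨hbb, hself, hbni⟩ := h0
    simp only [AF.Initial, not_forall, not_not] at hbni
    obtain ⟨γ, hγb⟩ := hbni
    have hγγ : ¬ F.att γ γ := fun h => hself γ h hγb
    by_cases hEb : ∃ e ∈ E, F.att e b
    · exact hEb
    · have hγAR := (F.att_mem _ _ hγb).1
      have hdef : F.Defends E γ := by
        intro y hy
        obtain ⟨Z, hZ, hZY⟩ := hX (some y, b) (pair_dgn hy hγb hγγ hbb)
          (dAtt_of_comp_s8 (Or.inr rfl) ha hb)
        obtain ⟨c, d, hc, hd, hcd⟩ := comp_of_dAtt hZY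
        rcases hd with hd | hd
        · obtain rfl : y = d := Option.some.inj hd
          exact ⟨c, dE_comp hZ hc, hcd⟩
        · have hd' : b = d := hd
          exact absurd ⟨c, dE_comp hZ hc, by rw [hd']; exact hcd⟩ hEb
      exact ⟨γ, hE.2 γ hγAR hdef, hγb⟩

lemma key2 {E : Set A} {D : Set (Option A × A)} (hE : F.Complete E)
    (hD : F.DComplete D) (hsub : F.dE E ⊆ D) {X : Option A × A} (hXD : X ∈ D)
    {a b : A} (ha : Comp X a) (hb : F.att b a) :
    ∃ s ∈ F.defSet D, F.att s b := by
  have hDnmd : D ⊆ F.nmd := hD.1.1.1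
  have hDDef : ∀ Z ∈ D, F.DDefends D Z := hD.1.2
  have hbAR := (F.att_mem _ _ hb).1
  by_cases h0 : F.att b b ∨ (∃ γ, F.att γ γ ∧ F.att γ b) ∨ F.Initial b
  · obtain ⟨Z, hZ, hZY⟩ := hDDef X hXD (none, b) (none_dgn hbAR h0)
      (dAtt_of_comp_s8 (Or.inr rfl) ha hb)
    obtain ⟨c, d, hc, hd, hcd⟩ := comp_of_dAtt hZY
    have hdb : b = d := by
      rcases hd with hd | hd
      · exact absurd hd (by simp)
      · exact hd
    exact ⟨c, mem_defSet_of_s8 hDnmd hZ hc, by rw [hdb]; exact hcd⟩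
  · push_neg at h0
    obtain ⟨hbb, hself, hbni⟩ := h0
    simp only [AF.Initial, not_forall, not_not] at hbni
    obtain ⟨γ, hγb⟩ := hbni
    have hγγ : ¬ F.att γ γ := fun h => hself γ h hγb
    have hγAR := (F.att_mem _ _ hγb).1
    by_cases hSb : ∃ s ∈ F.defSet D, F.att s b
    · exact hSb
    by_cases hγini : F.Initial γ
    · have hγE : γ ∈ E := hE.2 γ hγAR (fun c hc => absurd hc (hγini c))
      obtain ⟨Z, hZ, hZ2⟩ := exists_dE_snd hE hγE
      exact ⟨γ, mem_defSet_of_s8 hDnmd (hsub hZ) (Or.inr hZ2), hγb⟩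
    · simp only [AF.Initial, not_forall, not_not] at hγini
      obtain ⟨y₀, hy₀⟩ := hγini
      have hstar : ∀ y, F.att y γ → ∃ s ∈ F.defSet D, F.att s y := by
        intro y hy
        obtain ⟨Z, hZ, hZY⟩ := hDDef X hXD (some y, b) (pair_dgn hy hγb hγγ hbb)
          (dAtt_of_comp_s8 (Or.inr rfl) ha hb)
        obtain ⟨c, d, hc, hd, hcd⟩ := comp_of_dAtt hZY
        rcases hd with hd | hd
        · obtain rfl : y = d := Option.some.inj hd
          exact ⟨c, mem_defSet_of_s8 hDnmd hZ hc, hcd⟩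
        · have hd' : b = d := hd
          exact absurd ⟨c, mem_defSet_of_s8 hDnmd hZ hc, by rw [hd']; exact hcd⟩ hSb
      obtain ⟨s, hsS, hsy₀⟩ := hstar y₀ hy₀
      obtain ⟨Zs, hZs, hcs⟩ := host_of_defSet hsS
      have hss : ¬ F.att s s := defSet_noatt hD.1.1 hsS hsS
      have hsγ : ¬ F.att s γ := by
        intro h
        obtain ⟨t, htS, hts⟩ := hstar s h
        exact defSet_noatt hD.1.1 htS hsS hts
      have hsAR := (F.att_mem _ _ hsy₀).1
      have hy₀AR := (F.att_mem _ _ hy₀).1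
      have hγs : ¬ F.att γ s := by
        intro h
        have hnotcf : ¬ F.ConflictFree {s, γ} := fun hcf =>
          hcf.2 γ (by simp) s (by simp) h
        have hYg : ((some s, γ) : Option A × A) ∈ F.dgn := by
          refine Or.inr (Or.inl ⟨s, rfl, hsAR, hγAR, hnotcf, y₀, hy₀AR, ?_, ?_, hsy₀, hy₀⟩)
          · rintro rfl; exact hss hsy₀
          · rintro rfl; exact hγγ hy₀
        obtain ⟨Z', hZ', hZ'Y⟩ := hDDef Zs hZs (some s, γ) hYg
          (dAtt_of_comp_s8 (Or.inr rfl) hcs h)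
        obtain ⟨c, d, hc, hd, hcd⟩ := comp_of_dAtt hZ'Y
        rcases hd with hd | hd
        · obtain rfl : s = d := Option.some.inj hd
          exact defSet_noatt hD.1.1 (mem_defSet_of_s8 hDnmd hZ' hc) hsS hcd
        · have hd' : γ = d := hd
          obtain ⟨t, htS, htc⟩ := hstar c (by rw [hd']; exact hcd)
          exact defSet_noatt hD.1.1 htS (mem_defSet_of_s8 hDnmd hZ' hc) htc
      have hWnmd : ((some s, γ) : Option A × A) ∈ F.nmd :=
        Or.inl ⟨s, rfl, hsAR, hγAR, cf_pair hsAR hγAR hss hsγ hγs hγγ, y₀, hy₀AR, hsy₀, hy₀⟩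
      have hWdef : F.DDefends D (some s, γ) := by
        intro Y hY hYW
        obtain ⟨c, d, hc, hd, hcd⟩ := comp_of_dAtt hYW
        rcases hd with hd | hd
        · obtain rfl : s = d := Option.some.inj hd
          exact hDDef Zs hZs Y hY (dAtt_of_comp_s8 hc hcs hcd)
        · have hd' : γ = d := hd
          obtain ⟨t, htS, htc⟩ := hstar c (by rw [hd']; exact hcd)
          obtain ⟨Zt, hZt, hct⟩ := host_of_defSet htS
          exact ⟨Zt, hZt, dAtt_of_comp_s8 hct hc htc⟩
      exact ⟨γ, mem_defSet_of_s8 hDnmd (hD.2 _ hWnmd hWdef) (Or.inr rfl), hγb⟩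

lemma dE_DComplete {E : Set A} (hE : F.Complete E) : F.DComplete (F.dE E) := by
  have hsub : F.dE E ⊆ F.nmd := fun X hX => hX.1
  have hcf : F.DConflictFree (F.dE E) := by
    refine ⟨hsub, ?_⟩
    intro X hX Y hY hatt
    obtain ⟨c, d, hc, hd, hcd⟩ := comp_of_dAtt hatt
    exact hE.1.1.2 c (dE_comp hX hc) d (dE_comp hY hd) hcd
  refine ⟨⟨hcf, ?_⟩, ?_⟩
  · intro X hX Y hY hYX
    obtain ⟨c, d, hc, hd, hcd⟩ := comp_of_dAtt hYX
    obtain ⟨e, heE, hec⟩ := hE.1.2 d (dE_comp hX hd) c hcd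
    obtain ⟨Z, hZ, hZ2⟩ := exists_dE_snd hE heE
    exact ⟨Z, hZ, dAtt_of_comp_s8 (Or.inr hZ2) hc hec⟩
  · intro X hXnmd hXdef
    have hcomp : ∀ a, Comp X a → a ∈ E := fun a ha =>
      hE.2 a (comp_AR hXnmd ha) (fun b hb => key1 hE hXdef ha hb)
    refine ⟨hXnmd, ?_, hcomp X.2 (Or.inr rfl)⟩
    cases hX1 : X.1 with
    | none => exact Or.inl rfl
    | some a => exact Or.inr ⟨a, hcomp a (Or.inl hX1), rfl⟩

lemma defSet_Complete {E : Set A} {D : Set (Option A × A)} (hE : F.Complete E)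
    (hD : F.DComplete D) (hsub : F.dE E ⊆ D) : F.Complete (F.defSet D) := by
  have hDnmd : D ⊆ F.nmd := hD.1.1.1
  have hScf : F.ConflictFree (F.defSet D) :=
    ⟨fun a ha => ha.1, fun a ha b hb => defSet_noatt hD.1.1 ha hb⟩
  have hSdef : ∀ a ∈ F.defSet D, F.Defends (F.defSet D) a := by
    intro a ha b hb
    obtain ⟨Z, hZ, hc⟩ := host_of_defSet ha
    exact key2 hE hD hsub hZ hc hb
  refine ⟨⟨hScf, hSdef⟩, ?_⟩
  intro a haAR hdef
  by_cases hainit : F.Initial a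
  · have hmem : ((none, a) : Option A × A) ∈ D := by
      apply hD.2
      · exact Or.inr ⟨rfl, haAR, hainit⟩
      · intro Y hY hYW
        obtain ⟨c, d, hc, hd, hcd⟩ := comp_of_dAtt hYW
        have hda : a = d := by
          rcases hd with hd | hd
          · exact absurd hd (by simp)
          · exact hd
        exact absurd (by rw [hda]; exact hcd) (hainit c)
    exact ⟨haAR, Or.inl ⟨none, hmem⟩⟩
  · simp only [AF.Initial, not_forall, not_not] at hainit
    obtain ⟨b₀, hb₀⟩ := hainit
    obtain ⟨s, hsS, hsb₀⟩ := hdef b₀ hb₀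
    obtain ⟨Zs, hZs, hcs⟩ := host_of_defSet hsS
    have hss : ¬ F.att s s := defSet_noatt hD.1.1 hsS hsS
    have hnaa : ¬ F.att a a := by
      intro h
      obtain ⟨t, htS, hta⟩ := hdef a h
      obtain ⟨t', ht'S, h''⟩ := hdef t hta
      exact defSet_noatt hD.1.1 ht'S htS h''
    have hnsa : ¬ F.att s a := by
      intro h
      obtain ⟨t, htS, hts⟩ := hdef s h
      exact defSet_noatt hD.1.1 htS hsS hts
    have hnas : ¬ F.att a s := by
      intro h
      obtain ⟨t, htS, hta⟩ := key2 hE hD hsub hZs hcs h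
      obtain ⟨t', ht'S, h''⟩ := hdef t hta
      exact defSet_noatt hD.1.1 ht'S htS h''
    have hsAR := (F.att_mem _ _ hsb₀).1
    have hWnmd : ((some s, a) : Option A × A) ∈ F.nmd :=
      Or.inl ⟨s, rfl, hsAR, haAR, cf_pair hsAR haAR hss hnsa hnas hnaa, b₀,
        (F.att_mem _ _ hb₀).1, hsb₀, hb₀⟩
    have hWD : ((some s, a) : Option A × A) ∈ D := by
      apply hD.2 _ hWnmd
      intro Y hY hYW
      obtain ⟨c, d, hc, hd, hcd⟩ := comp_of_dAtt hYW
      rcases hd with hd | hd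
      · obtain rfl : s = d := Option.some.inj hd
        exact hD.1.2 Zs hZs Y hY (dAtt_of_comp_s8 hc hcs hcd)
      · have hd' : a = d := hd
        obtain ⟨t, htS, htc⟩ := hdef c (by rw [hd']; exact hcd)
        obtain ⟨Zt, hZt, hct⟩ := host_of_defSet htS
        exact ⟨Zt, hZt, dAtt_of_comp_s8 hct hc htc⟩
    exact ⟨haAR, Or.inl ⟨some s, hWD⟩⟩

end AF

end Aux

/-- for every preferred extension `E` of `F`,
`d(E)` is a preferred extension of defenses of the defense graph of `F`. -/
theorem statement8 {A : Type*} (F : AF A) (E : Set A)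
    (hE : E ∈ F.pr) : F.dE E ∈ F.PR := by
  obtain ⟨hEco, hEmax⟩ := hE
  refine ⟨AF.dE_DComplete hEco, ?_⟩
  intro D hD hsub
  have hDnmd : D ⊆ F.nmd := hD.1.1.1
  have hES : E ⊆ F.defSet D := by
    intro e he
    obtain ⟨Z, hZ, hZ2⟩ := AF.exists_dE_snd hEco he
    exact AF.mem_defSet_of_s8 hDnmd (hsub hZ) (Or.inr hZ2)
  have hEq : E = F.defSet D := hEmax _ (AF.defSet_Complete hEco hD hsub) hES
  refine Set.Subset.antisymm hsub ?_
  intro X hX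
  have hc : ∀ a, AF.Comp X a → a ∈ E := fun a ha =>
    hEq ▸ AF.mem_defSet_of_s8 hDnmd hX ha
  refine ⟨hDnmd hX, ?_, hc X.2 (Or.inr rfl)⟩
  cases hX1 : X.1 with
  | none => exact Or.inl rfl
  | some a => exact Or.inr ⟨a, hc a (Or.inl hX1), rfl⟩
end
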